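/- Let e : ℕ → ℝ satisfy e(0) = 0, e(1) = 1, and e(n) = (2/(n-1))·Σ_{k=0}^{n-2} e(k) for all n ≥ 2. Then for every real x with |x| < 1, the series Σ_{n=0}^{∞} e(n)·x^n converges and its sum equals x·e^{−2x}/(1−x)^2. -/

import Mathlib

/-!
The closed form `e n = ∑_{m ≤ n} (-2)^m / m! * (n - m)` is the coefficient sequence of the
Cauchy product of `exp (-2x) = ∑ (-2x)^m / m!` with `x / (1 - x)^2 = ∑ n x^n`. To identify it with
`e`, difference the recurrence: `(n + 1) e (n + 2) = n e (n + 1) + 2 e n`, which together with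
`e 0` and `e 1` determines the sequence and which the closed form satisfies.
-/

open Finset Nat

namespace Dimer

noncomputable def expCoeff (n : ℕ) : ℝ := (-2) ^ n / n !

noncomputable def expPartialSum (n : ℕ) : ℝ := ∑ m ∈ range (n + 1), expCoeff m

noncomputable def closedForm (n : ℕ) : ℝ := ∑ m ∈ range (n + 1), expCoeff m * (n - m : ℕ)

def Recurrence (a : ℕ → ℝ) : Prop :=
  ∀ n : ℕ, ((n : ℝ) + 1) * a (n + 2) = n * a (n + 1) + 2 * a n

lemma succ_mul_expCoeff_succ (n : ℕ) : ((n : ℝ) + 1) * expCoeff (n + 1) = -2 * expCoeff n := by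
  have : ((n : ℝ) + 1) ≠ 0 := by positivity
  simp only [expCoeff, factorial_succ, pow_succ, cast_mul, cast_add, cast_one]
  field_simp

lemma expPartialSum_succ (n : ℕ) :
    expPartialSum (n + 1) = expPartialSum n + expCoeff (n + 1) :=
  sum_range_succ _ _

lemma closedForm_succ (n : ℕ) : closedForm (n + 1) = closedForm n + expPartialSum n := by
  rw [closedForm, sum_range_succ, Nat.sub_self, cast_zero, mul_zero, add_zero, closedForm,
    expPartialSum, ← sum_add_distrib]
  refine sum_congr rfl fun m hm => ?_
  rw [Nat.sub_add_comm (mem_range_succ_iff.mp hm)]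
  push_cast
  ring

/-- The inductive step reduces to `(n + 2) c (n + 2) = -2 c (n + 1)`: this is where the constant
`2` of the recurrence has to match the `-2` of `exp (-2x)`. -/
lemma succ_mul_expPartialSum_succ_add (n : ℕ) :
    ((n : ℝ) + 1) * expPartialSum (n + 1) + expPartialSum n = closedForm n := by
  induction n with
  | zero => norm_num [expPartialSum, closedForm, expCoeff, sum_range_succ]
  | succ n ih =>
    have hc := succ_mul_expCoeff_succ (n + 1)
    push_cast at hc ⊢
    rw [closedForm_succ, ← ih, expPartialSum_succ (n + 1), expPartialSum_succ n]
    linear_combination hc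

lemma recurrence_closedForm : Recurrence closedForm := by
  intro n
  have key := succ_mul_expPartialSum_succ_add n
  rw [closedForm_succ (n + 1), closedForm_succ n, expPartialSum_succ n] at *
  linear_combination key

lemma Recurrence.eq {a b : ℕ → ℝ} (ha : Recurrence a) (hb : Recurrence b) (h0 : a 0 = b 0)
    (h1 : a 1 = b 1) : a = b := by
  suffices ∀ n, a n = b n ∧ a (n + 1) = b (n + 1) from funext fun n => (this n).1
  intro n
  induction n with
  | zero => exact ⟨h0, h1⟩
  | succ n ih =>
    refine ⟨ih.2, mul_left_cancel₀ (by positivity : ((n : ℝ) + 1) ≠ 0) ?_⟩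
    rw [ha, hb, ih.1, ih.2]

lemma recurrence_of_sum_eq {e : ℕ → ℝ}
    (hrec : ∀ n : ℕ, 2 ≤ n → e n = (2 / ((n : ℝ) - 1)) * ∑ k ∈ range (n - 1), e k) :
    Recurrence e := by
  have hsum (n : ℕ) : ((n : ℝ) + 1) * e (n + 2) = 2 * ∑ k ∈ range (n + 1), e k := by
    rw [hrec (n + 2) (by omega), show n + 2 - 1 = n + 1 by omega]
    push_cast
    rw [show (n : ℝ) + 2 - 1 = n + 1 by ring]
    field_simp
  intro n
  cases n with
  | zero => simpa using hsum 0
  | succ n =>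
    rw [hsum, sum_range_succ, mul_add, ← hsum]
    push_cast
    ring

lemma hasSum_closedForm_mul_pow {x : ℝ} (hx : |x| < 1) :
    HasSum (fun n => closedForm n * x ^ n) (Real.exp (-2 * x) * (x / (1 - x) ^ 2)) := by
  have hexp : HasSum (fun n => (-2 * x) ^ n / n !) (Real.exp (-2 * x)) := by
    simpa [Real.exp_eq_exp_ℝ] using NormedSpace.expSeries_div_hasSum_exp (-2 * x)
  have hx' : ‖x‖ < 1 := by rwa [Real.norm_eq_abs]
  have hgeom : HasSum (fun n : ℕ => (n : ℝ) * x ^ n) (x / (1 - x) ^ 2) :=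
    hasSum_coe_mul_geometric_of_norm_lt_one hx'
  have hgeom_norm : Summable fun n : ℕ => ‖(n : ℝ) * x ^ n‖ := by
    simpa using summable_norm_pow_mul_geometric_of_norm_lt_one 1 hx'
  have hcauchy := hasSum_sum_range_mul_of_summable_norm
    (NormedSpace.norm_expSeries_div_summable (-2 * x)) hgeom_norm
  rw [hexp.tsum_eq, hgeom.tsum_eq] at hcauchy
  have hterm (n : ℕ) : ∑ m ∈ range (n + 1), (-2 * x) ^ m / m ! * ((n - m : ℕ) * x ^ (n - m)) =
      closedForm n * x ^ n := by
    rw [closedForm, sum_mul]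
    refine sum_congr rfl fun m hm => ?_
    have hpow : x ^ n = x ^ m * x ^ (n - m) := by
      rw [← pow_add, Nat.add_sub_cancel' (mem_range_succ_iff.mp hm)]
    rw [expCoeff, hpow, mul_pow]
    ring
  simpa only [hterm] using hcauchy

end Dimer

theorem stmt_4 (e : ℕ → ℝ) (h0 : e 0 = 0) (h1 : e 1 = 1)
    (hrec : ∀ n : ℕ, 2 ≤ n →
      e n = (2 / ((n : ℝ) - 1)) * ∑ k ∈ Finset.range (n - 1), e k)
    (x : ℝ) (hx : |x| < 1) :
    HasSum (fun n : ℕ => e n * x ^ n)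
      (x * Real.exp (-2 * x) / (1 - x) ^ 2) := by
  have he : e = Dimer.closedForm :=
    (Dimer.recurrence_of_sum_eq hrec).eq Dimer.recurrence_closedForm
      (by simp [h0, Dimer.closedForm])
      (by norm_num [h1, Dimer.closedForm, Dimer.expCoeff, sum_range_succ])
  subst he
  convert Dimer.hasSum_closedForm_mul_pow hx using 1
  ring
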